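/- arXiv:1712.01130 — 2 statements merged into one kernel-verified Lean document; each statement's English description precedes it below -/
import Mathlib

section
/- Let γ be the regular octagon with vertices A_i = (cos((2i+1)π/8), sin((2i+1)π/8)) for i = 0,…,7, and let C_i be the intersection of the lines through A_{i-1}A_i and A_{i+1}A_{i+2} (indices mod 8). Then the octagon γ^i obtained by reflecting γ through the point C_i is congruent to γ, and consecutive octagons γ^i and γ^{i+1} share exactly one common boundary point (a common vertex). -/
open Real

/-- The vertices of the regular octagon. -/
noncomputable def octVertex (i : Fin 8) : ℝ × ℝ :=
  (Real.cos ((2 * (i : ℕ) + 1) * π / 8), Real.sin ((2 * (i : ℕ) + 1) * π / 8))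

/-- The regular octagon `γ`. -/
noncomputable def octagon : Set (ℝ × ℝ) := convexHull ℝ (Set.range octVertex)

/-- The line through the vertices `A_i` and `A_{i+1}`. -/
noncomputable def octLine (i : Fin 8) : Set (ℝ × ℝ) :=
  (affineSpan ℝ {octVertex i, octVertex (i + 1)} : AffineSubspace ℝ (ℝ × ℝ))

/-! ### Scalar facts about `cos (π/8)` and `sin (π/8)` -/

lemma s8_pos : 0 < sin (π/8) := by
  apply Real.sin_pos_of_pos_of_lt_pi <;> [positivity; nlinarith [pi_pos]]

lemma c8_pos : 0 < cos (π/8) := by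
  apply Real.cos_pos_of_mem_Ioo
  constructor <;> nlinarith [pi_pos]

lemma s8_eq : sin (π/8) = Real.sqrt 2 * cos (π/8) - cos (π/8) := by
  have h1 : cos (π/8) ^ 2 - sin (π/8) ^ 2 = Real.sqrt 2 / 2 := by
    have := Real.cos_two_mul (π/8); have := Real.sin_sq_add_cos_sq (π/8)
    rw [show (2:ℝ) * (π/8) = π/4 by ring, Real.cos_pi_div_four] at *; nlinarith
  have h2 : 2 * sin (π/8) * cos (π/8) = Real.sqrt 2 / 2 := by
    rw [show (2:ℝ) * sin (π/8) * cos (π/8) = sin (2 * (π/8)) by rw [Real.sin_two_mul]]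
    rw [show (2:ℝ) * (π/8) = π/4 by ring, Real.sin_pi_div_four]
  have hsq : Real.sqrt 2 ^ 2 = 2 := Real.sq_sqrt (by norm_num)
  have key : (sin (π/8) - (Real.sqrt 2 * cos (π/8) - cos (π/8))) *
      (sin (π/8) + (Real.sqrt 2 * cos (π/8) + cos (π/8))) = 0 := by
    nlinarith [h1, h2, hsq]
  rcases mul_eq_zero.mp key with h | h
  · linarith
  · nlinarith [s8_pos, c8_pos, Real.sqrt_nonneg 2, h]

lemma hrt : Real.sqrt 2 * cos (π/8) = sin (π/8) + cos (π/8) := by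
  have := s8_eq; linarith

/-! ### Vertex value table -/

lemma oV0 : octVertex 0 = (cos (π/8), sin (π/8)) := by
  norm_num [octVertex, show ((0:Fin 8):ℕ) = 0 from rfl]
lemma oV1 : octVertex 1 = (sin (π/8), cos (π/8)) := by
  have h : ((2 * (((1:Fin 8)) : ℕ) + 1 : ℝ)) * π / 8 = π/2 - π/8 := by
    norm_num [show ((1:Fin 8):ℕ) = 1 from rfl]; ring
  rw [octVertex, h, Real.cos_pi_div_two_sub, Real.sin_pi_div_two_sub]
lemma oV2 : octVertex 2 = (-sin (π/8), cos (π/8)) := by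
  have h : ((2 * (((2:Fin 8)) : ℕ) + 1 : ℝ)) * π / 8 = π/8 + π/2 := by
    norm_num [show ((2:Fin 8):ℕ) = 2 from rfl]; ring
  rw [octVertex, h, Real.cos_add_pi_div_two, Real.sin_add_pi_div_two]
lemma oV3 : octVertex 3 = (-cos (π/8), sin (π/8)) := by
  have h : ((2 * (((3:Fin 8)) : ℕ) + 1 : ℝ)) * π / 8 = π - π/8 := by
    norm_num [show ((3:Fin 8):ℕ) = 3 from rfl]; ring
  rw [octVertex, h, Real.cos_pi_sub, Real.sin_pi_sub]
lemma oV4 : octVertex 4 = (-cos (π/8), -sin (π/8)) := by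
  have h : ((2 * (((4:Fin 8)) : ℕ) + 1 : ℝ)) * π / 8 = π/8 + π := by
    norm_num [show ((4:Fin 8):ℕ) = 4 from rfl]; ring
  rw [octVertex, h, Real.cos_add_pi, Real.sin_add_pi]
lemma oV5 : octVertex 5 = (-sin (π/8), -cos (π/8)) := by
  have h : ((2 * (((5:Fin 8)) : ℕ) + 1 : ℝ)) * π / 8 = (π/2 - π/8) + π := by
    norm_num [show ((5:Fin 8):ℕ) = 5 from rfl]; ring
  rw [octVertex, h, Real.cos_add_pi, Real.sin_add_pi, Real.cos_pi_div_two_sub,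
    Real.sin_pi_div_two_sub]
lemma oV6 : octVertex 6 = (sin (π/8), -cos (π/8)) := by
  have h : ((2 * (((6:Fin 8)) : ℕ) + 1 : ℝ)) * π / 8 = (π/8 + π/2) + π := by
    norm_num [show ((6:Fin 8):ℕ) = 6 from rfl]; ring
  rw [octVertex, h, Real.cos_add_pi, Real.sin_add_pi, Real.cos_add_pi_div_two,
    Real.sin_add_pi_div_two]; norm_num
lemma oV7 : octVertex 7 = (cos (π/8), -sin (π/8)) := by
  have h : ((2 * (((7:Fin 8)) : ℕ) + 1 : ℝ)) * π / 8 = (π - π/8) + π := by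
    norm_num [show ((7:Fin 8):ℕ) = 7 from rfl]; ring
  rw [octVertex, h, Real.cos_add_pi, Real.sin_add_pi, Real.cos_pi_sub, Real.sin_pi_sub]
  norm_num

/-! ### The octagon is contained in the closed unit disk -/

lemma oct_disk : octagon ⊆ {y : ℝ × ℝ | y.1 ^ 2 + y.2 ^ 2 ≤ 1} := by
  rw [octagon]
  apply convexHull_min
  · rintro y ⟨i, rfl⟩
    simp only [octVertex, Set.mem_setOf_eq]
    nlinarith [Real.sin_sq_add_cos_sq ((2 * (i:ℕ) + 1) * π / 8)]
  · rintro x hx y hy a b ha hb hab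
    simp only [Set.mem_setOf_eq] at *
    simp only [Prod.fst_add, Prod.snd_add, Prod.smul_fst, Prod.smul_snd, smul_eq_mul]
    nlinarith [mul_nonneg (mul_nonneg ha hb) (sq_nonneg (x.1 - y.1)),
      mul_nonneg (mul_nonneg ha hb) (sq_nonneg (x.2 - y.2)),
      mul_nonneg ha (by linarith : (0:ℝ) ≤ 1 - x.1 ^ 2 - x.2 ^ 2),
      mul_nonneg hb (by linarith : (0:ℝ) ≤ 1 - y.1 ^ 2 - y.2 ^ 2)]

lemma dot_le {y v : ℝ × ℝ} (hy : y ∈ octagon) (hv : v.1 ^ 2 + v.2 ^ 2 = 1) :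
    y.1 * v.1 + y.2 * v.2 ≤ 1 := by
  have := oct_disk hy
  simp only [Set.mem_setOf_eq] at this
  nlinarith [sq_nonneg (y.1 - v.1), sq_nonneg (y.2 - v.2)]

lemma eq_of_dot {y v : ℝ × ℝ} (hy : y ∈ octagon) (hv : v.1 ^ 2 + v.2 ^ 2 = 1)
    (h : y.1 * v.1 + y.2 * v.2 = 1) : y = v := by
  have h0 := oct_disk hy
  simp only [Set.mem_setOf_eq] at h0
  have e1 : (y.1 - v.1) ^ 2 + (y.2 - v.2) ^ 2 ≤ 0 := by nlinarith
  have : y.1 = v.1 := by nlinarith [sq_nonneg (y.1 - v.1), sq_nonneg (y.2 - v.2)]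
  have : y.2 = v.2 := by nlinarith [sq_nonneg (y.1 - v.1), sq_nonneg (y.2 - v.2)]
  exact Prod.ext_iff.mpr ⟨by assumption, by assumption⟩

/-! ### Key uniqueness lemma -/

lemma key_unique (c1 c2 a : ℝ × ℝ) (ha : a ∈ Set.range octVertex)
    (ha' : -a ∈ Set.range octVertex) (hd : c1 - c2 = a) :
    ∃! p : ℝ × ℝ, p ∈ ((fun x => (2 : ℝ) • c1 - x) '' octagon) ∩
      ((fun x => (2 : ℝ) • c2 - x) '' octagon) := by
  have hna : a.1 ^ 2 + a.2 ^ 2 = 1 := by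
    obtain ⟨i, rfl⟩ := ha
    simp only [octVertex]
    nlinarith [Real.sin_sq_add_cos_sq ((2 * (i:ℕ) + 1) * π / 8)]
  have hna' : (-a).1 ^ 2 + (-a).2 ^ 2 = 1 := by
    simp only [Prod.fst_neg, Prod.snd_neg]; nlinarith
  have hao : a ∈ octagon := subset_convexHull ℝ _ ha
  have hao' : -a ∈ octagon := subset_convexHull ℝ _ ha'
  have hd1 : c1.1 - c2.1 = a.1 := by rw [← hd]; rfl
  have hd2 : c1.2 - c2.2 = a.2 := by rw [← hd]; rfl
  refine ⟨(2 : ℝ) • c1 - a, ⟨⟨a, hao, rfl⟩, ⟨-a, hao', ?_⟩⟩, ?_⟩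
  · apply Prod.ext_iff.mpr
    constructor <;>
      simp only [Prod.fst_sub, Prod.snd_sub, Prod.smul_fst, Prod.smul_snd, smul_eq_mul,
        Prod.fst_neg, Prod.snd_neg] <;> linarith
  · rintro x ⟨⟨y, hy, hxy⟩, ⟨z, hz, hxz⟩⟩
    have ey1 : x.1 = 2 * c1.1 - y.1 := by
      rw [← hxy]; simp [Prod.fst_sub]
    have ey2 : x.2 = 2 * c1.2 - y.2 := by
      rw [← hxy]; simp [Prod.snd_sub]
    have ez1 : x.1 = 2 * c2.1 - z.1 := by
      rw [← hxz]; simp [Prod.fst_sub]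
    have ez2 : x.2 = 2 * c2.2 - z.2 := by
      rw [← hxz]; simp [Prod.snd_sub]
    have hby : y.1 * a.1 + y.2 * a.2 ≤ 1 := dot_le hy hna
    have hbz : z.1 * (-a).1 + z.2 * (-a).2 ≤ 1 := dot_le hz hna'
    simp only [Prod.fst_neg, Prod.snd_neg] at hbz
    have k1 : y.1 - z.1 = 2 * a.1 := by linarith
    have k2 : y.2 - z.2 = 2 * a.2 := by linarith
    have k3 : (y.1 - z.1) * a.1 + (y.2 - z.2) * a.2 = 2 * (a.1 ^ 2 + a.2 ^ 2) := by
      rw [k1, k2]; ring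
    have hdy : y.1 * a.1 + y.2 * a.2 = 1 := by nlinarith [k3, hby, hbz, hna]
    have hdz : z.1 * (-a).1 + z.2 * (-a).2 = 1 := by
      simp only [Prod.fst_neg, Prod.snd_neg]; nlinarith [k3, hby, hbz, hna]
    have hyeq : y = a := eq_of_dot hy hna hdy
    have hzeq : z = -a := eq_of_dot hz hna' hdz
    rw [← hxy, hyeq]

/-! ### The intersection points -/

/-- Explicit values of the intersection points `C i`. -/
noncomputable def ctr : Fin 8 → ℝ × ℝ :=
  ![(cos (π/8), cos (π/8)), (0, Real.sqrt 2 * cos (π/8)), (-cos (π/8), cos (π/8)),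
    (-(Real.sqrt 2 * cos (π/8)), 0), (-cos (π/8), -cos (π/8)),
    (0, -(Real.sqrt 2 * cos (π/8))), (cos (π/8), -cos (π/8)), (Real.sqrt 2 * cos (π/8), 0)]

lemma cT0 : ctr 0 = (cos (π/8), cos (π/8)) := by
  simp only [ctr]; rfl
lemma cT1 : ctr 1 = (0, Real.sqrt 2 * cos (π/8)) := by
  simp only [ctr]; rfl
lemma cT2 : ctr 2 = (-cos (π/8), cos (π/8)) := by
  simp only [ctr]; rfl
lemma cT3 : ctr 3 = (-(Real.sqrt 2 * cos (π/8)), 0) := by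
  simp only [ctr]; rfl
lemma cT4 : ctr 4 = (-cos (π/8), -cos (π/8)) := by
  simp only [ctr]; rfl
lemma cT5 : ctr 5 = (0, -(Real.sqrt 2 * cos (π/8))) := by
  simp only [ctr]; rfl
lemma cT6 : ctr 6 = (cos (π/8), -cos (π/8)) := by
  simp only [ctr]; rfl
lemma cT7 : ctr 7 = (Real.sqrt 2 * cos (π/8), 0) := by
  simp only [ctr]; rfl

lemma octLine_mem_iff {k : Fin 8} {x : ℝ × ℝ} (h : x ∈ octLine k) :
    ∃ r : ℝ, x = r • (octVertex (k + 1) - octVertex k) + octVertex k := by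
  rw [octLine, SetLike.mem_coe] at h
  have h2 : (x - octVertex k) +ᵥ octVertex k ∈
      affineSpan ℝ {octVertex k, octVertex (k + 1)} := by
    simpa using h
  obtain ⟨r, hr⟩ := vadd_left_mem_affineSpan_pair.mp h2
  exact ⟨r, by rw [vsub_eq_sub] at hr; rw [hr]; abel⟩

set_option maxHeartbeats 1000000 in
lemma C_eq_ctr (C : Fin 8 → ℝ × ℝ)
    (hC : ∀ i : Fin 8, octLine (i - 1) ∩ octLine (i + 1) = {C i}) :
    ∀ j : Fin 8, C j = ctr j := by
  intro j
  have hm : C j ∈ octLine (j - 1) ∩ octLine (j + 1) := by rw [hC j]; rfl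
  obtain ⟨t1, ht1⟩ := octLine_mem_iff hm.1
  obtain ⟨t2, ht2⟩ := octLine_mem_iff hm.2
  clear hm hC
  fin_cases j
  · replace ht1 : C 0 = t1 • (octVertex 0 - octVertex 7) + octVertex 7 := ht1
    replace ht2 : C 0 = t2 • (octVertex 2 - octVertex 1) + octVertex 1 := ht2
    show C 0 = ctr 0
    rw [oV7, oV0] at ht1
    rw [oV1, oV2] at ht2
    rw [cT0]
    simp only [Prod.mk_sub_mk, Prod.smul_mk, smul_eq_mul, Prod.mk_add_mk, Prod.ext_iff] at ht1 ht2
    obtain ⟨p1, p2⟩ := ht1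
    obtain ⟨q1, q2⟩ := ht2
    rw [Prod.ext_iff]
    constructor <;> simp only [] <;> (try rw [hrt]) <;> nlinarith [p1, p2, q1, q2, hrt]
  · replace ht1 : C 1 = t1 • (octVertex 1 - octVertex 0) + octVertex 0 := ht1
    replace ht2 : C 1 = t2 • (octVertex 3 - octVertex 2) + octVertex 2 := ht2
    show C 1 = ctr 1
    rw [oV0, oV1] at ht1
    rw [oV2, oV3] at ht2
    rw [cT1]
    simp only [Prod.mk_sub_mk, Prod.smul_mk, smul_eq_mul, Prod.mk_add_mk, Prod.ext_iff] at ht1 ht2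
    obtain ⟨p1, p2⟩ := ht1
    obtain ⟨q1, q2⟩ := ht2
    rw [Prod.ext_iff]
    constructor <;> simp only [] <;> (try rw [hrt]) <;> nlinarith [p1, p2, q1, q2, hrt]
  · replace ht1 : C 2 = t1 • (octVertex 2 - octVertex 1) + octVertex 1 := ht1
    replace ht2 : C 2 = t2 • (octVertex 4 - octVertex 3) + octVertex 3 := ht2
    show C 2 = ctr 2
    rw [oV1, oV2] at ht1
    rw [oV3, oV4] at ht2
    rw [cT2]
    simp only [Prod.mk_sub_mk, Prod.smul_mk, smul_eq_mul, Prod.mk_add_mk, Prod.ext_iff] at ht1 ht2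
    obtain ⟨p1, p2⟩ := ht1
    obtain ⟨q1, q2⟩ := ht2
    rw [Prod.ext_iff]
    constructor <;> simp only [] <;> (try rw [hrt]) <;> nlinarith [p1, p2, q1, q2, hrt]
  · replace ht1 : C 3 = t1 • (octVertex 3 - octVertex 2) + octVertex 2 := ht1
    replace ht2 : C 3 = t2 • (octVertex 5 - octVertex 4) + octVertex 4 := ht2
    show C 3 = ctr 3
    rw [oV2, oV3] at ht1
    rw [oV4, oV5] at ht2
    rw [cT3]
    simp only [Prod.mk_sub_mk, Prod.smul_mk, smul_eq_mul, Prod.mk_add_mk, Prod.ext_iff] at ht1 ht2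
    obtain ⟨p1, p2⟩ := ht1
    obtain ⟨q1, q2⟩ := ht2
    rw [Prod.ext_iff]
    constructor <;> simp only [] <;> (try rw [hrt]) <;> nlinarith [p1, p2, q1, q2, hrt]
  · replace ht1 : C 4 = t1 • (octVertex 4 - octVertex 3) + octVertex 3 := ht1
    replace ht2 : C 4 = t2 • (octVertex 6 - octVertex 5) + octVertex 5 := ht2
    show C 4 = ctr 4
    rw [oV3, oV4] at ht1
    rw [oV5, oV6] at ht2
    rw [cT4]
    simp only [Prod.mk_sub_mk, Prod.smul_mk, smul_eq_mul, Prod.mk_add_mk, Prod.ext_iff] at ht1 ht2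
    obtain ⟨p1, p2⟩ := ht1
    obtain ⟨q1, q2⟩ := ht2
    rw [Prod.ext_iff]
    constructor <;> simp only [] <;> (try rw [hrt]) <;> nlinarith [p1, p2, q1, q2, hrt]
  · replace ht1 : C 5 = t1 • (octVertex 5 - octVertex 4) + octVertex 4 := ht1
    replace ht2 : C 5 = t2 • (octVertex 7 - octVertex 6) + octVertex 6 := ht2
    show C 5 = ctr 5
    rw [oV4, oV5] at ht1
    rw [oV6, oV7] at ht2
    rw [cT5]
    simp only [Prod.mk_sub_mk, Prod.smul_mk, smul_eq_mul, Prod.mk_add_mk, Prod.ext_iff] at ht1 ht2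
    obtain ⟨p1, p2⟩ := ht1
    obtain ⟨q1, q2⟩ := ht2
    rw [Prod.ext_iff]
    constructor <;> simp only [] <;> (try rw [hrt]) <;> nlinarith [p1, p2, q1, q2, hrt]
  · replace ht1 : C 6 = t1 • (octVertex 6 - octVertex 5) + octVertex 5 := ht1
    replace ht2 : C 6 = t2 • (octVertex 0 - octVertex 7) + octVertex 7 := ht2
    show C 6 = ctr 6
    rw [oV5, oV6] at ht1
    rw [oV7, oV0] at ht2
    rw [cT6]
    simp only [Prod.mk_sub_mk, Prod.smul_mk, smul_eq_mul, Prod.mk_add_mk, Prod.ext_iff] at ht1 ht2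
    obtain ⟨p1, p2⟩ := ht1
    obtain ⟨q1, q2⟩ := ht2
    rw [Prod.ext_iff]
    constructor <;> simp only [] <;> (try rw [hrt]) <;> nlinarith [p1, p2, q1, q2, hrt]
  · replace ht1 : C 7 = t1 • (octVertex 7 - octVertex 6) + octVertex 6 := ht1
    replace ht2 : C 7 = t2 • (octVertex 1 - octVertex 0) + octVertex 0 := ht2
    show C 7 = ctr 7
    rw [oV6, oV7] at ht1
    rw [oV0, oV1] at ht2
    rw [cT7]
    simp only [Prod.mk_sub_mk, Prod.smul_mk, smul_eq_mul, Prod.mk_add_mk, Prod.ext_iff] at ht1 ht2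
    obtain ⟨p1, p2⟩ := ht1
    obtain ⟨q1, q2⟩ := ht2
    rw [Prod.ext_iff]
    constructor <;> simp only [] <;> (try rw [hrt]) <;> nlinarith [p1, p2, q1, q2, hrt]

lemma ctr_sub (i : Fin 8) : ctr i - ctr (i + 1) = octVertex (i - 1) := by
  have h := hrt
  fin_cases i
  · show ctr 0 - ctr 1 = octVertex 7
    rw [cT0, cT1, oV7, Prod.mk_sub_mk, Prod.ext_iff]
    constructor <;> simp only [] <;> linarith
  · show ctr 1 - ctr 2 = octVertex 0
    rw [cT1, cT2, oV0, Prod.mk_sub_mk, Prod.ext_iff]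
    constructor <;> simp only [] <;> linarith
  · show ctr 2 - ctr 3 = octVertex 1
    rw [cT2, cT3, oV1, Prod.mk_sub_mk, Prod.ext_iff]
    constructor <;> simp only [] <;> linarith
  · show ctr 3 - ctr 4 = octVertex 2
    rw [cT3, cT4, oV2, Prod.mk_sub_mk, Prod.ext_iff]
    constructor <;> simp only [] <;> linarith
  · show ctr 4 - ctr 5 = octVertex 3
    rw [cT4, cT5, oV3, Prod.mk_sub_mk, Prod.ext_iff]
    constructor <;> simp only [] <;> linarith
  · show ctr 5 - ctr 6 = octVertex 4
    rw [cT5, cT6, oV4, Prod.mk_sub_mk, Prod.ext_iff]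
    constructor <;> simp only [] <;> linarith
  · show ctr 6 - ctr 7 = octVertex 5
    rw [cT6, cT7, oV5, Prod.mk_sub_mk, Prod.ext_iff]
    constructor <;> simp only [] <;> linarith
  · show ctr 7 - ctr 0 = octVertex 6
    rw [cT7, cT0, oV6, Prod.mk_sub_mk, Prod.ext_iff]
    constructor <;> simp only [] <;> linarith

lemma neg_vertex (i : Fin 8) : -octVertex (i - 1) = octVertex (i + 3) := by
  fin_cases i
  · show -octVertex 7 = octVertex 3
    rw [oV7, oV3, Prod.neg_mk]
    try norm_num [-Real.cos_pi_div_eight, -Real.sin_pi_div_eight]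
  · show -octVertex 0 = octVertex 4
    rw [oV0, oV4, Prod.neg_mk]
    try norm_num [-Real.cos_pi_div_eight, -Real.sin_pi_div_eight]
  · show -octVertex 1 = octVertex 5
    rw [oV1, oV5, Prod.neg_mk]
    try norm_num [-Real.cos_pi_div_eight, -Real.sin_pi_div_eight]
  · show -octVertex 2 = octVertex 6
    rw [oV2, oV6, Prod.neg_mk]
    try norm_num [-Real.cos_pi_div_eight, -Real.sin_pi_div_eight]
  · show -octVertex 3 = octVertex 7
    rw [oV3, oV7, Prod.neg_mk]
    try norm_num [-Real.cos_pi_div_eight, -Real.sin_pi_div_eight]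
  · show -octVertex 4 = octVertex 0
    rw [oV4, oV0, Prod.neg_mk]
    try norm_num [-Real.cos_pi_div_eight, -Real.sin_pi_div_eight]
  · show -octVertex 5 = octVertex 1
    rw [oV5, oV1, Prod.neg_mk]
    try norm_num [-Real.cos_pi_div_eight, -Real.sin_pi_div_eight]
  · show -octVertex 6 = octVertex 2
    rw [oV6, oV2, Prod.neg_mk]
    try norm_num [-Real.cos_pi_div_eight, -Real.sin_pi_div_eight]

/-- if `C i` is the intersection point of the lines `A_{i-1}A_i` and
`A_{i+1}A_{i+2}`, and `γ^i` is the reflection of the octagon through `C i`, then `γ^i`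
is congruent to `γ` (it is an isometric image of `γ`) and consecutive octagons `γ^i`,
`γ^{i+1}` meet in exactly one point. -/
theorem reflected_octagons_necklace
    (C : Fin 8 → ℝ × ℝ)
    (hC : ∀ i : Fin 8, octLine (i - 1) ∩ octLine (i + 1) = {C i})
    (Γ : Fin 8 → Set (ℝ × ℝ))
    (hΓ : ∀ i, Γ i = (fun x => (2 : ℝ) • C i - x) '' octagon) :
    (∀ i, ∀ x ∈ octagon, ∀ y ∈ octagon,
        dist ((2 : ℝ) • C i - x) ((2 : ℝ) • C i - y) = dist x y) ∧
      ∀ i : Fin 8, ∃! p : ℝ × ℝ, p ∈ Γ i ∩ Γ (i + 1) := by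
  have hCval := C_eq_ctr C hC
  constructor
  · intro i x hx y hy
    simp only [Prod.dist_eq, Real.dist_eq, Prod.fst_sub, Prod.snd_sub, Prod.smul_fst,
      Prod.smul_snd, smul_eq_mul]
    congr 1
    · rw [show (2:ℝ) * (C i).1 - x.1 - ((2:ℝ) * (C i).1 - y.1) = -(x.1 - y.1) by ring, abs_neg]
    · rw [show (2:ℝ) * (C i).2 - x.2 - ((2:ℝ) * (C i).2 - y.2) = -(x.2 - y.2) by ring, abs_neg]
  · intro i
    rw [hΓ i, hΓ (i + 1), hCval i, hCval (i + 1)]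
    exact key_unique _ _ _ ⟨i - 1, rfl⟩ (neg_vertex i ▸ ⟨i + 3, rfl⟩) (ctr_sub i)
end

section
/- For the outer billiard map T outside a regular octagon γ, the reflected octagons γ^i satisfy T(γ^i) = γ^{(i+3) mod 8} for all i ∈ {0,…,7}. -/
/-!
On the interior of `γ^i` the map `T` is the reflection through `A_{i+2}`. Indeed, each vertex
`2 C_i - A_m` of `γ^i` sees every vertex `A_k` weakly to the left of the ray towards `A_{i+2}`;
these are finitely many checks, and only `i = 0` needs checking because the whole configuration
is invariant under rotation by `π / 4`. Convexity of `γ^i` and `γ` and openness of the interior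
make the inequalities strict for every interior point of `γ^i` and every `q ∈ γ \ {A_{i+2}}`,
which is the tangent condition. Finally, reflecting through `C_i` and then `A_{i+2}` is the
translation by `2 (A_{i+2} - C_i) = 2 C_{i+3}`, and `-γ = γ` turns this translate into `γ^{i+3}`.
-/

open Real

/-- The planar cross product. -/
def det2 (u v : ℝ × ℝ) : ℝ := u.1 * v.2 - u.2 * v.1

/-- The open region of points outside the octagon whose right tangent line to the
octagon touches it exactly at the vertex `A_j`. -/
noncomputable def tangentRegion (j : Fin 8) : Set (ℝ × ℝ) :=
  {p | p ∉ octagon ∧ ∀ q ∈ octagon, q ≠ octVertex j →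
        0 < det2 (octVertex j - p) (q - p)}

theorem AffineMap.pos_of_mem_interior {E : Type*} [NormedAddCommGroup E] [NormedSpace ℝ E]
    [FiniteDimensional ℝ E] (f : E →ᵃ[ℝ] ℝ) (hf : f.linear ≠ 0) {S : Set E}
    (hS : ∀ x ∈ S, 0 ≤ f x) {p : E} (hp : p ∈ interior S) : 0 < f p := by
  have hf_open : IsOpenMap f := isOpenMap_linear_iff.mp <|
    f.linear.isOpenMap_of_finiteDimensional (LinearMap.surjective_iff_ne_zero.mpr hf)
  have : f p ∈ interior (Set.Ici 0) :=
    interior_mono (Set.image_subset_iff.mpr hS) (hf_open.image_interior_subset S ⟨p, hp, rfl⟩)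
  simpa using this

theorem AffineMap.pos_of_mem_convexHull {E : Type*} [AddCommGroup E] [Module ℝ E]
    (f : E →ᵃ[ℝ] ℝ) {s : Set E} {a q : E} (hfa : f a = 0) (hs : ∀ x ∈ s, x ≠ a → 0 < f x)
    (hq : q ∈ convexHull ℝ s) (hqa : q ≠ a) : 0 < f q := by
  have hsub : s ⊆ insert a (s \ {a}) := fun x hx => by by_cases h : x = a <;> simp [h, hx]
  rcases (s \ {a}).eq_empty_or_nonempty with hempty | hne
  · rw [hempty, insert_empty_eq] at hsub
    exact absurd (convexHull_min hsub (convex_singleton a) hq) hqa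
  have hq' := convexHull_mono hsub hq
  rw [convexHull_insert hne, mem_convexJoin] at hq'
  obtain ⟨_, rfl, y, hy, hqy⟩ := hq'
  have hfy : 0 < f y :=
    convexHull_min (fun x hx => hs x hx.1 hx.2) ((convex_Ioi 0).affine_preimage f) hy
  rw [segment_eq_image_lineMap] at hqy
  obtain ⟨t, ht, rfl⟩ := hqy
  have ht : 0 < t := ht.1.lt_of_ne' (by rintro rfl; simp at hqa)
  rw [f.apply_lineMap, hfa, AffineMap.lineMap_apply_module, smul_zero, zero_add, smul_eq_mul]
  positivity

theorem two_smul_sub_eq_pointReflection {E : Type*} [AddCommGroup E] [Module ℝ E] (c x : E) :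
    (2 : ℝ) • c - x = Equiv.pointReflection c x := by
  rw [Equiv.pointReflection_apply, two_smul, vsub_eq_sub, vadd_eq_add]
  abel

theorem image_pointReflection_image_pointReflection {E : Type*} [AddCommGroup E] {S : Set E}
    (hS : -S = S) (a b : E) :
    Equiv.pointReflection a '' (Equiv.pointReflection b '' S) =
      Equiv.pointReflection (a - b) '' S := by
  conv_rhs => rw [← hS]
  rw [Set.image_image]
  refine (Set.image_neg_of_apply_neg_eq fun x _ => ?_).symm
  simp only [Equiv.pointReflection_apply, vsub_eq_sub, vadd_eq_add]
  abel

/-- `x ↦ det2 (a - x) (b - x)`, twice the signed area of the triangle `x a b`. -/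
def signedArea (a b : ℝ × ℝ) : ℝ × ℝ →ᵃ[ℝ] ℝ where
  toFun x := det2 (a - x) (b - x)
  linear := (b - a).1 • LinearMap.snd ℝ ℝ ℝ - (b - a).2 • LinearMap.fst ℝ ℝ ℝ
  map_vadd' x v := by simp [det2]; ring

theorem signedArea_apply (a b x : ℝ × ℝ) : signedArea a b x = det2 (a - x) (b - x) := rfl

theorem signedArea_linear_ne_zero {a b : ℝ × ℝ} (hab : a ≠ b) : (signedArea a b).linear ≠ 0 := by
  intro h
  have h1 := LinearMap.congr_fun h (1, 0)
  have h2 := LinearMap.congr_fun h (0, 1)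
  simp [signedArea] at h1 h2
  exact hab (Prod.ext (by linarith) (by linarith))

theorem det2_sub_sub_cyclic (a p q : ℝ × ℝ) : det2 (a - p) (q - p) = det2 (p - q) (a - q) := by
  simp only [det2, Prod.fst_sub, Prod.snd_sub]
  ring

noncomputable def planeRotation (θ : ℝ) : ℝ × ℝ →ₗ[ℝ] ℝ × ℝ :=
  (cos θ • LinearMap.fst ℝ ℝ ℝ - sin θ • LinearMap.snd ℝ ℝ ℝ).prod
    (sin θ • LinearMap.fst ℝ ℝ ℝ + cos θ • LinearMap.snd ℝ ℝ ℝ)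

theorem det2_planeRotation (θ : ℝ) (u v : ℝ × ℝ) :
    det2 (planeRotation θ u) (planeRotation θ v) = det2 u v := by
  simp [planeRotation, det2]
  linear_combination (u.1 * v.2 - u.2 * v.1) * sin_sq_add_cos_sq θ

theorem octVertex_of_val_eq_mod {i : Fin 8} {n : ℕ} (hi : (i : ℕ) = n % 8) :
    octVertex i = (cos ((2 * n + 1) * π / 8), sin ((2 * n + 1) * π / 8)) := by
  have h : ((2 * n + 1) * π / 8 : ℝ) = (2 * (i : ℕ) + 1) * π / 8 + (n / 8 : ℕ) * (2 * π) := by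
    have := Nat.mod_add_div n 8
    rw [← hi, ← Nat.cast_inj (R := ℝ)] at this
    push_cast at this ⊢
    linear_combination (-π / 4) * this
  rw [h, cos_add_nat_mul_two_pi, sin_add_nat_mul_two_pi, octVertex]

theorem octVertex_add (i j : Fin 8) : octVertex (i + j) =
    (cos ((2 * (i : ℕ) + 1) * π / 8 + (j : ℕ) * (π / 4)),
      sin ((2 * (i : ℕ) + 1) * π / 8 + (j : ℕ) * (π / 4))) := by
  have h : (2 * ((i : ℕ) + (j : ℕ) : ℕ) + 1) * π / 8 =
      (2 * (i : ℕ) + 1) * π / 8 + (j : ℕ) * (π / 4) := by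
    push_cast
    ring
  rw [octVertex_of_val_eq_mod (Fin.val_add i j), h]

theorem octVertex_add_one (i : Fin 8) :
    octVertex (i + 1) = planeRotation (π / 4) (octVertex i) := by
  rw [octVertex_add, octVertex]
  simp [planeRotation, cos_add, sin_add]
  constructor <;> ring

theorem octVertex_add_four (i : Fin 8) : octVertex (i + 4) = -octVertex i := by
  rw [octVertex_add, octVertex]
  simp [show (4 : ℝ) * (π / 4) = π by ring, cos_add_pi, sin_add_pi]

theorem octVertex_add_two_add (i : Fin 8) :
    octVertex (i + 2) + octVertex i = √2 • octVertex (i + 1) := by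
  rw [octVertex_add, octVertex_add, octVertex]
  set φ := (2 * (i : ℕ) + 1) * π / 8
  have h2 : √2 * √2 = 2 := Real.mul_self_sqrt zero_le_two
  simp [cos_add, sin_add, Prod.ext_iff, show 2 * (π / 4) = π / 2 by ring]
  constructor
  · linear_combination (sin φ - cos φ) / 2 * h2
  · linear_combination -(sin φ + cos φ) / 2 * h2

theorem octVertex_eq : octVertex = ![(cos (π / 8), sin (π / 8)), (sin (π / 8), cos (π / 8)),
    (-sin (π / 8), cos (π / 8)), (-cos (π / 8), sin (π / 8)), (-cos (π / 8), -sin (π / 8)),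
    (-sin (π / 8), -cos (π / 8)), (sin (π / 8), -cos (π / 8)), (cos (π / 8), -sin (π / 8))] := by
  have angle (j : Fin 8) (x : ℝ) (hx : (2 * (j : ℕ) + 1 : ℝ) * π / 8 = x) :
      octVertex j = (cos x, sin x) := by rw [octVertex, hx]
  have h1 : octVertex 1 = (sin (π / 8), cos (π / 8)) := by
    rw [angle 1 (π / 2 - π / 8) (by norm_num; ring), cos_pi_div_two_sub, sin_pi_div_two_sub]
  have h2 : octVertex 2 = (-sin (π / 8), cos (π / 8)) := by
    rw [angle 2 (π / 8 + π / 2) (by norm_num; ring), cos_add_pi_div_two, sin_add_pi_div_two]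
  have h3 : octVertex 3 = (-cos (π / 8), sin (π / 8)) := by
    rw [angle 3 (π - π / 8) (by norm_num; ring), cos_pi_sub, sin_pi_sub]
  funext i
  fin_cases i
  · simp [octVertex]
  · exact h1
  · exact h2
  · exact h3
  · simpa [octVertex] using octVertex_add_four 0
  · simpa [h1] using octVertex_add_four 1
  · simpa [h2] using octVertex_add_four 2
  · simpa [h3] using octVertex_add_four 3

theorem octVertex_injective : Function.Injective octVertex := by
  have hs : 0 < sin (π / 8) := sin_pos_of_pos_of_lt_pi (by positivity) (by linarith [pi_pos])
  have hsc : sin (π / 8) < cos (π / 8) := by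
    rw [← cos_pi_div_two_sub]
    exact cos_lt_cos_of_nonneg_of_le_pi (by positivity) (by linarith [pi_pos])
      (by linarith [pi_pos])
  intro j k h
  obtain ⟨h1, h2⟩ := Prod.ext_iff.mp h
  rw [octVertex_eq] at h1 h2
  generalize cos (π / 8) = c at *
  generalize sin (π / 8) = s at *
  fin_cases j <;> fin_cases k <;> simp at h1 h2 ⊢ <;> linarith

theorem neg_octagon : -octagon = octagon := by
  rw [octagon, ← convexHull_neg, Set.neg_range]
  have h : (fun i => -octVertex i) = octVertex ∘ Equiv.addRight (4 : Fin 8) :=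
    funext fun i => (octVertex_add_four i).symm
  rw [h, EquivLike.range_comp]

/-- The point `C_i`: as `A_{j-1} + A_{j+1} = √2 • A_j`, it lies on `l_{i-1}` and `l_{i+1}`. -/
noncomputable def octApex (i : Fin 8) : ℝ × ℝ := (√2)⁻¹ • (octVertex i + octVertex (i + 1))

theorem sqrt_two_inv_mul_self : (√2)⁻¹ * √2 = 1 := inv_mul_cancel₀ (by positivity)

theorem octApex_add_one_eq_lineMap (i : Fin 8) :
    octApex (i + 1) = AffineMap.lineMap (octVertex i) (octVertex (i + 1)) (1 + (√2)⁻¹) := by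
  rw [octApex, AffineMap.lineMap_apply_module, show i + 1 + 1 = i + 2 by abel,
    eq_sub_of_add_eq (octVertex_add_two_add i)]
  ext <;> simp
  · linear_combination (octVertex (i + 1)).1 * sqrt_two_inv_mul_self
  · linear_combination (octVertex (i + 1)).2 * sqrt_two_inv_mul_self

theorem octApex_eq_lineMap (i : Fin 8) :
    octApex i = AffineMap.lineMap (octVertex (i + 1)) (octVertex (i + 2)) (-(√2)⁻¹) := by
  rw [octApex, AffineMap.lineMap_apply_module, eq_sub_of_add_eq' (octVertex_add_two_add i)]
  ext <;> simp
  · linear_combination (octVertex (i + 1)).1 * sqrt_two_inv_mul_self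
  · linear_combination (octVertex (i + 1)).2 * sqrt_two_inv_mul_self

theorem octApex_mem_octLine (i : Fin 8) : octApex i ∈ octLine (i - 1) ∩ octLine (i + 1) := by
  constructor
  · rw [octLine, ← sub_add_cancel i 1, add_sub_cancel_right, octApex_add_one_eq_lineMap]
    exact AffineMap.lineMap_mem_affineSpan_pair _ _ _
  · rw [octLine, octApex_eq_lineMap, show i + 1 + 1 = i + 2 by abel]
    exact AffineMap.lineMap_mem_affineSpan_pair _ _ _

theorem octApex_add_one (i : Fin 8) : octApex (i + 1) = planeRotation (π / 4) (octApex i) := by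
  simp only [octApex, map_smul, map_add, octVertex_add_one]

theorem octApex_add_octApex_add_three (i : Fin 8) :
    octApex i + octApex (i + 3) = octVertex (i + 2) := by
  have h := octVertex_add_two_add (i + 1)
  rw [show i + 1 + 2 = i + 3 by abel, show i + 1 + 1 = i + 2 by abel] at h
  rw [octApex, octApex, show i + 3 + 1 = i + 4 by abel, octVertex_add_four, ← smul_add,
    show octVertex i + octVertex (i + 1) + (octVertex (i + 3) + -octVertex i)
      = octVertex (i + 3) + octVertex (i + 1) by abel,
    h, smul_smul, sqrt_two_inv_mul_self, one_smul]

theorem octApex_zero : octApex 0 = (cos (π / 8), cos (π / 8)) := by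
  have h := congrArg Prod.snd (octVertex_add_one 0)
  rw [octApex, zero_add, octVertex_eq] at *
  simp only [planeRotation, cos_pi_div_four, sin_pi_div_four] at h
  generalize cos (π / 8) = c at *
  generalize sin (π / 8) = s at *
  have hsum : c + s = √2 * c := by
    simp at h
    linear_combination (-√2) * h - (c + s) / 2 * Real.mul_self_sqrt zero_le_two
  ext <;> simp [add_comm s, hsum]

theorem det2_reflect_octApex_zero_nonneg (m k : Fin 8) :
    0 ≤ det2 (octVertex 2 - ((2 : ℝ) • octApex 0 - octVertex m))
      (octVertex k - ((2 : ℝ) • octApex 0 - octVertex m)) := by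
  have hsq : cos (π / 8) ^ 2 + sin (π / 8) ^ 2 = 1 := cos_sq_add_sin_sq _
  have hcos : cos (π / 8) ^ 2 - sin (π / 8) ^ 2 = √2 / 2 := by
    rw [← cos_two_mul', ← cos_pi_div_four]; ring_nf
  have hsin : 2 * sin (π / 8) * cos (π / 8) = √2 / 2 := by
    rw [← sin_two_mul, ← sin_pi_div_four]; ring_nf
  have hlo : 1.414 < √2 := by nlinarith [Real.sq_sqrt zero_le_two, Real.sqrt_nonneg 2]
  have hhi : √2 < 1.415 := by nlinarith [Real.sq_sqrt zero_le_two, Real.sqrt_nonneg 2]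
  rw [octApex_zero, octVertex_eq]
  generalize cos (π / 8) = c at *
  generalize sin (π / 8) = s at *
  -- each case is a quadratic form in `c, s`, hence linear in `c², s², sc`
  fin_cases m <;> fin_cases k <;> simp [det2] <;> linarith

theorem det2_reflect_octApex_nonneg (i m k : Fin 8) :
    0 ≤ det2 (octVertex (i + 2) - ((2 : ℝ) • octApex i - octVertex m))
      (octVertex k - ((2 : ℝ) • octApex i - octVertex m)) := by
  induction i using Fin.induction generalizing m k with
  | zero => exact det2_reflect_octApex_zero_nonneg m k
  | succ i ih =>
    have h := ih (m - 1) (k - 1)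
    rw [← det2_planeRotation (π / 4)] at h
    simpa only [map_sub, map_smul, ← octVertex_add_one, ← octApex_add_one, sub_add_cancel,
      show i.castSucc + 2 + 1 = i.castSucc + 1 + 2 by abel, Fin.coeSucc_eq_succ] using h

theorem image_pointReflection_octApex_subset (i k : Fin 8) :
    Equiv.pointReflection (octApex i) '' octagon ⊆
      {p | 0 ≤ signedArea (octVertex (i + 2)) (octVertex k) p} := by
  rw [Set.image_subset_iff, octagon]
  refine convexHull_min ?_ ?_
  · rintro _ ⟨m, rfl⟩
    simpa [signedArea_apply, ← two_smul_sub_eq_pointReflection] using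
      det2_reflect_octApex_nonneg i m k
  · exact ((convex_Ici 0).affine_preimage (signedArea _ _)).affine_preimage
      (AffineEquiv.pointReflection ℝ (octApex i)).toAffineMap

theorem mem_tangentRegion_of_forall_det2_pos {j : Fin 8} {p : ℝ × ℝ}
    (hp : ∀ k, k ≠ j → 0 < det2 (octVertex j - p) (octVertex k - p)) : p ∈ tangentRegion j := by
  have hpos : ∀ q ∈ octagon, q ≠ octVertex j → 0 < det2 (octVertex j - p) (q - p) := by
    intro q hq hqj
    rw [det2_sub_sub_cyclic, ← signedArea_apply]
    refine (signedArea p (octVertex j)).pos_of_mem_convexHull (by simp [signedArea_apply, det2])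
      ?_ hq hqj
    rintro _ ⟨k, rfl⟩ hk
    rw [signedArea_apply, ← det2_sub_sub_cyclic]
    exact hp k (octVertex_injective.ne_iff.mp hk)
  refine ⟨fun hpo => ?_, hpos⟩
  by_cases hpj : p = octVertex j
  · have h := hp (j + 1) (by simp)
    simp [hpj, det2] at h
  · simpa [det2] using hpos p hpo hpj

theorem interior_image_pointReflection_octApex_subset (i : Fin 8) :
    interior (Equiv.pointReflection (octApex i) '' octagon) ⊆ tangentRegion (i + 2) :=
  fun _ hp => mem_tangentRegion_of_forall_det2_pos fun k hk =>
    (signedArea _ _).pos_of_mem_interior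
      (signedArea_linear_ne_zero (octVertex_injective.ne hk.symm))
      (image_pointReflection_octApex_subset i k) hp

/-- for the outer billiard map `T` outside the regular octagon
(acting as `p ↦ 2 A_j - p` on the tangent region of the vertex `A_j`),
the reflected octagons satisfy `T(γ^i) = γ^{(i+3) mod 8}`: the interior of `γ^i`
lies in a single tangent region and is mapped by `T` onto the interior of `γ^{i+3}`. -/
theorem outer_billiard_maps_necklace
    (C : Fin 8 → ℝ × ℝ)
    (hC : ∀ i : Fin 8, octLine (i - 1) ∩ octLine (i + 1) = {C i})
    (Γ : Fin 8 → Set (ℝ × ℝ))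
    (hΓ : ∀ i, Γ i = (fun x => (2 : ℝ) • C i - x) '' octagon)
    (T : ℝ × ℝ → ℝ × ℝ)
    (hT : ∀ j : Fin 8, ∀ p ∈ tangentRegion j, T p = (2 : ℝ) • octVertex j - p) :
    ∀ i : Fin 8, ∃ j : Fin 8, interior (Γ i) ⊆ tangentRegion j ∧
      T '' interior (Γ i) = interior (Γ (i + 3)) := by
  have hΓ' (i : Fin 8) : Γ i = Equiv.pointReflection (octApex i) '' octagon := by
    have hCi : C i = octApex i :=
      ((Set.eq_singleton_iff_unique_mem.mp (hC i)).2 _ (octApex_mem_octLine i)).symm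
    simp only [hΓ, hCi, two_smul_sub_eq_pointReflection]
  intro i
  have hsub : interior (Γ i) ⊆ tangentRegion (i + 2) :=
    hΓ' i ▸ interior_image_pointReflection_octApex_subset i
  refine ⟨i + 2, hsub, ?_⟩
  calc T '' interior (Γ i) = Equiv.pointReflection (octVertex (i + 2)) '' interior (Γ i) :=
        Set.image_congr fun p hp => by rw [hT _ p (hsub hp), two_smul_sub_eq_pointReflection]
    _ = interior (Equiv.pointReflection (octVertex (i + 2)) '' Γ i) :=
        (ContinuousAffineEquiv.pointReflection ℝ _).toHomeomorph.image_interior _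
    _ = interior (Γ (i + 3)) := by
        rw [hΓ', hΓ', image_pointReflection_image_pointReflection neg_octagon,
          ← octApex_add_octApex_add_three, add_sub_cancel_left]
end
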